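/- There exists a perfect matching of the truncated trihexagonal ((4,6,12)) lattice with respect to which some hexagonal face admits a flip but no square face admits a flip and no dodecagonal face admits a flip. Hence the hexagon flip is necessary for ergodicity of perfect matchings on this lattice. -/
import Mathlib


abbrev V2 : Type := ℤ × ℤ

/-- The list of edges of the closed cycle through the vertices of `l`, in order. -/
def cycEdges {V : Type*} (l : List V) : List (Sym2 V) :=
  (l.zip (l.rotate 1)).map fun p => s(p.1, p.2)

/-- The edges of `es` lie alternately inside and outside of `M`. -/
def Alternates {V : Type*} (M : Set (Sym2 V)) (es : List (Sym2 V)) : Prop :=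
  (∀ (i : ℕ) (h : i < es.length), es.get ⟨i, h⟩ ∈ M ↔ Even i) ∨
  (∀ (i : ℕ) (h : i < es.length), es.get ⟨i, h⟩ ∈ M ↔ ¬ Even i)

/-- `M'` is obtained from `M` by a flip along the closed cycle through `l`:
the cycle edges alternate in and out of `M`, and `M'` is the symmetric difference. -/
def FlipAlong {V : Type*} (M M' : Set (Sym2 V)) (l : List V) : Prop :=
  Alternates M (cycEdges l) ∧ M' = symmDiff M {e | e ∈ cycEdges l}

/-- The face/cycle with vertex list `l` admits a flip with respect to `M`. -/
def AdmitsFlip {V : Type*} (M : Set (Sym2 V)) (l : List V) : Prop :=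
  Alternates M (cycEdges l)

/-- `M` is a perfect matching of `G`, viewed as a set of edges. -/
def IsPerfectMatching {V : Type*} (G : SimpleGraph V) (M : Set (Sym2 V)) : Prop :=
  M ⊆ G.edgeSet ∧ ∀ v : V, ∃! e, e ∈ M ∧ v ∈ e

/-- `M` is a perfect matching of the induced subgraph of `G` on vertex set `R`. -/
def IsPerfectMatchingOn {V : Type*} (G : SimpleGraph V) (R : Set V) (M : Set (Sym2 V)) : Prop :=
  (∀ e ∈ M, e ∈ G.edgeSet ∧ ∀ x ∈ e, x ∈ R) ∧ ∀ v ∈ R, ∃! e, e ∈ M ∧ v ∈ e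

/-- Vertices of the truncated trihexagonal `(4,6,12)` lattice: one dodecagon of twelve
vertices per site of the triangular Bravais lattice `ℤ²`. -/
abbrev TT : Type := V2 × Fin 12

/-- The truncated trihexagonal lattice: in each cell the dodecagon 12-cycle
`(v,0), …, (v,11)`, and pairs of bridge edges joining each dodecagon to each of its six
neighbouring dodecagons (in directions `±(1,0)`, `±(0,1)`, `±(1,1)`), each pair forming
a square face; the remaining faces are hexagons. -/
def ttLattice : SimpleGraph TT :=
  SimpleGraph.fromRel (fun a b =>
    (b.1 = a.1 ∧ b.2 = a.2 + 1) ∨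
    (a.2 = 1 ∧ b.2 = 6 ∧ b.1 = a.1 + (1,0)) ∨
    (a.2 = 0 ∧ b.2 = 7 ∧ b.1 = a.1 + (1,0)) ∨
    (a.2 = 3 ∧ b.2 = 8 ∧ b.1 = a.1 + (1,1)) ∨
    (a.2 = 2 ∧ b.2 = 9 ∧ b.1 = a.1 + (1,1)) ∨
    (a.2 = 5 ∧ b.2 = 10 ∧ b.1 = a.1 + (0,1)) ∨
    (a.2 = 4 ∧ b.2 = 11 ∧ b.1 = a.1 + (0,1)))

/-- The dodecagonal face at `v`. -/
def dodecFace (v : V2) : List TT := (List.finRange 12).map (fun i => (v, i))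

/-- The square face between the dodecagons at `v` and `v + (1,0)`. -/
def sqFaceA (v : V2) : List TT := [(v,0), (v,1), (v+(1,0),6), (v+(1,0),7)]

/-- The square face between the dodecagons at `v` and `v + (1,1)`. -/
def sqFaceB (v : V2) : List TT := [(v,2), (v,3), (v+(1,1),8), (v+(1,1),9)]

/-- The square face between the dodecagons at `v` and `v + (0,1)`. -/
def sqFaceC (v : V2) : List TT := [(v,4), (v,5), (v+(0,1),10), (v+(0,1),11)]

/-- The hexagonal face between the dodecagons at `v`, `v + (1,0)` and `v + (1,1)`. -/
def hexUp (v : V2) : List TT :=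
  [(v,1), (v,2), (v+(1,1),9), (v+(1,1),10), (v+(1,0),5), (v+(1,0),6)]

/-- The hexagonal face between the dodecagons at `v`, `v + (1,1)` and `v + (0,1)`. -/
def hexDown (v : V2) : List TT :=
  [(v,3), (v,4), (v+(0,1),11), (v+(0,1),0), (v+(1,1),7), (v+(1,1),8)]


/-! ### Auxiliary construction: an explicit perfect matching -/

/-- The partner function of the matching: dodecagon edges `1-2`, `5-6`, `9-10`,
and bridge edges `0-7`, `3-8`, `4-11`. -/
def pf (x : TT) : TT :=
  match x.2 with
  | 0 => (x.1 + (1,0), 7)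
  | 1 => (x.1, 2)
  | 2 => (x.1, 1)
  | 3 => (x.1 + (1,1), 8)
  | 4 => (x.1 + (0,1), 11)
  | 5 => (x.1, 6)
  | 6 => (x.1, 5)
  | 7 => (x.1 + (-1,0), 0)
  | 8 => (x.1 + (-1,-1), 3)
  | 9 => (x.1, 10)
  | 10 => (x.1, 9)
  | 11 => (x.1 + (0,-1), 4)

/-- The matching as a set of edges. -/
def pM : Set (Sym2 TT) := {e | ∃ x : TT, e = s(x, pf x)}

lemma pf_invol (x : TT) : pf (pf x) = x := by
  obtain ⟨v, i⟩ := x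
  fin_cases i <;> simp [pf] <;> abel

lemma mem_pM (a b : TT) : s(a, b) ∈ pM ↔ b = pf a := by
  constructor
  · rintro ⟨x, hx⟩
    rw [Sym2.eq_iff] at hx
    rcases hx with ⟨rfl, rfl⟩ | ⟨rfl, rfl⟩
    · rfl
    · rw [pf_invol]
  · rintro rfl; exact ⟨a, rfl⟩

lemma pM_sub : pM ⊆ ttLattice.edgeSet := by
  rintro e ⟨⟨v, i⟩, rfl⟩
  rw [SimpleGraph.mem_edgeSet]
  fin_cases i <;>
    simp [pf, ttLattice, SimpleGraph.fromRel_adj, Prod.ext_iff] <;> abel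

lemma pM_matching (v : TT) : ∃! e, e ∈ pM ∧ v ∈ e := by
  refine ⟨s(v, pf v), ⟨⟨v, rfl⟩, by simp⟩, ?_⟩
  rintro e ⟨⟨x, rfl⟩, hv⟩
  rw [Sym2.mem_iff] at hv
  rcases hv with rfl | rfl
  · rfl
  · rw [pf_invol, Sym2.eq_swap]

lemma hexUp_flip : AdmitsFlip pM (hexUp 0) := by
  left
  intro i h
  have h6 : i < 6 := by simpa [cycEdges, hexUp] using h
  interval_cases i <;>
    rw [show (cycEdges (hexUp 0)).get ⟨_, h⟩ = s(_, _) from rfl, mem_pM] <;>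
      simp [pf, Prod.ext_iff] <;> decide

lemma no_sqA (v : V2) : ¬ AdmitsFlip pM (sqFaceA v) := by
  rintro (h | h)
  · have h0 := (h 0 (by simp [cycEdges, sqFaceA])).mpr (by norm_num)
    rw [show (cycEdges (sqFaceA v)).get ⟨0, _⟩ = s((v,0),(v,1)) from rfl, mem_pM] at h0
    simp [pf, Prod.ext_iff] at h0
  · have h1 := (h 1 (by simp [cycEdges, sqFaceA])).mpr (by decide)
    rw [show (cycEdges (sqFaceA v)).get ⟨1, _⟩ = s((v,1),(v+(1,0),6)) from rfl, mem_pM] at h1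
    simp [pf, Prod.ext_iff] at h1

lemma no_sqB (v : V2) : ¬ AdmitsFlip pM (sqFaceB v) := by
  rintro (h | h)
  · have h0 := (h 0 (by simp [cycEdges, sqFaceB])).mpr (by norm_num)
    rw [show (cycEdges (sqFaceB v)).get ⟨0, _⟩ = s((v,2),(v,3)) from rfl, mem_pM] at h0
    simp [pf, Prod.ext_iff] at h0
  · have h3 := (h 3 (by simp [cycEdges, sqFaceB])).mpr (by decide)
    rw [show (cycEdges (sqFaceB v)).get ⟨3, _⟩ = s((v+(1,1),9),(v,2)) from rfl, mem_pM] at h3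
    simp [pf, Prod.ext_iff] at h3

lemma no_sqC (v : V2) : ¬ AdmitsFlip pM (sqFaceC v) := by
  rintro (h | h)
  · have h0 := (h 0 (by simp [cycEdges, sqFaceC])).mpr (by norm_num)
    rw [show (cycEdges (sqFaceC v)).get ⟨0, _⟩ = s((v,4),(v,5)) from rfl, mem_pM] at h0
    simp [pf, Prod.ext_iff] at h0
  · have h1 := (h 1 (by simp [cycEdges, sqFaceC])).mpr (by decide)
    rw [show (cycEdges (sqFaceC v)).get ⟨1, _⟩ = s((v,5),(v+(0,1),10)) from rfl, mem_pM] at h1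
    simp [pf, Prod.ext_iff] at h1

lemma no_dodec (v : V2) : ¬ AdmitsFlip pM (dodecFace v) := by
  rintro (h | h)
  · have h0 := (h 0 (by simp [cycEdges, dodecFace])).mpr (by norm_num)
    rw [show (cycEdges (dodecFace v)).get ⟨0, _⟩ = s((v,0),(v,1)) from rfl, mem_pM] at h0
    simp [pf, Prod.ext_iff] at h0
  · have h3 := (h 3 (by simp [cycEdges, dodecFace])).mpr (by decide)
    rw [show (cycEdges (dodecFace v)).get ⟨3, _⟩ = s((v,3),(v,4)) from rfl, mem_pM] at h3
    simp [pf, Prod.ext_iff] at h3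

/-- There is a perfect matching of the `(4,6,12)` lattice with respect
to which some hexagonal face admits a flip but no square and no dodecagonal face does.
Hence the hexagon flip is necessary for ergodicity. -/
theorem trunc_trihex_hexagon_flip_necessary :
    ∃ M : Set (Sym2 TT), IsPerfectMatching ttLattice M ∧
      (∃ v : V2, AdmitsFlip M (hexUp v) ∨ AdmitsFlip M (hexDown v)) ∧
      (∀ v : V2, ¬ AdmitsFlip M (sqFaceA v) ∧ ¬ AdmitsFlip M (sqFaceB v) ∧
        ¬ AdmitsFlip M (sqFaceC v)) ∧
      (∀ v : V2, ¬ AdmitsFlip M (dodecFace v)) := by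
  exact ⟨pM, ⟨pM_sub, pM_matching⟩, ⟨0, Or.inl hexUp_flip⟩,
    fun v => ⟨no_sqA v, no_sqB v, no_sqC v⟩, fun v => no_dodec v⟩
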